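/- arXiv:2206.14402 — 6 statements merged into one kernel-verified Lean document; each statement's English description precedes it below -/
import Mathlib

section
/- Let (Ω, F, ℙ) be a probability space equipped with a filtration (F_k)_{k∈ℕ}, and let (S_k)_{k∈ℕ} be a nonnegative, integrable, adapted real-valued stochastic process such that for every k ∈ ℕ, 𝔼[S_{k+1} | F_k] ≤ S_k + ψ almost surely, where ψ ≥ 0 is a constant. Then for every time horizon T ∈ ℕ and every λ > 0, ℙ{ max_{0 ≤ k ≤ T} S_k ≥ λ } ≤ (𝔼[S_0] + ψ·T) / λ. -/
/-!
Subtracting the accumulated drift turns `S` into the supermartingale `S k - ψ k`; adding the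
constant `ψ T` makes it dominate `S` and stay nonnegative up to time `T`, with expectation
`𝔼[S 0] + ψ T` at time `0`. For a supermartingale `g` that is nonnegative up to time `n`, stop at
the first time `g` reaches `lam` (or at `n`): the stopped value is at least `lam` on the event
`{max_{k ≤ n} g k ≥ lam}`, so Markov's inequality and optional stopping give
`lam · ℙ{max_{k ≤ n} g k ≥ lam} ≤ 𝔼[g 0]`.
-/

open MeasureTheory

namespace MeasureTheory

variable {Ω : Type*} {m0 : MeasurableSpace Ω} {μ : Measure Ω} {ℱ : Filtration ℕ m0}

theorem supermartingale_sub_drift [IsFiniteMeasure μ] {S : ℕ → Ω → ℝ} {ψ : ℝ}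
    (hadapted : Adapted ℱ S) (hint : ∀ k, Integrable (S k) μ)
    (hdrift : ∀ k, μ[S (k + 1) | ℱ k] ≤ᵐ[μ] fun ω => S k ω + ψ) :
    Supermartingale (fun k ω => S k ω - ψ * k) ℱ μ := by
  refine supermartingale_nat (fun k => ((hadapted k).sub measurable_const).stronglyMeasurable)
    (fun k => (hint k).sub (integrable_const _)) fun k => ?_
  have hcondExp : μ[fun ω => S (k + 1) ω - ψ * ↑(k + 1) | ℱ k]
      =ᵐ[μ] μ[S (k + 1) | ℱ k] - fun _ => ψ * ↑(k + 1) :=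
    (condExp_sub (hint (k + 1)) (integrable_const _) _).trans (by rw [condExp_const (ℱ.le k)])
  filter_upwards [hcondExp, hdrift k] with ω hω hdriftω
  rw [hω, Pi.sub_apply]
  push_cast
  linarith

theorem Supermartingale.expected_stoppedValue_antitone [SigmaFiniteFiltration μ ℱ]
    {f : ℕ → Ω → ℝ} {τ π : Ω → WithTop ℕ} (hf : Supermartingale f ℱ μ) (hτ : IsStoppingTime ℱ τ)
    (hπ : IsStoppingTime ℱ π) (hle : τ ≤ π) {N : ℕ} (hbdd : ∀ ω, π ω ≤ N) :
    ∫ ω, stoppedValue f π ω ∂μ ≤ ∫ ω, stoppedValue f τ ω ∂μ := by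
  have := hf.neg.expected_stoppedValue_mono hτ hπ hle hbdd
  simp only [stoppedValue_neg, Pi.neg_apply, integral_neg] at this
  linarith

theorem Supermartingale.integrable_stoppedValue {f : ℕ → Ω → ℝ} {τ : Ω → WithTop ℕ}
    (hf : Supermartingale f ℱ μ) (hτ : IsStoppingTime ℱ τ) {N : ℕ} (hbdd : ∀ ω, τ ω ≤ N) :
    Integrable (stoppedValue f τ) μ := by
  simpa [stoppedValue_neg] using hf.neg.integrable_stoppedValue hτ hbdd

theorem Supermartingale.maximal_ineq [IsFiniteMeasure μ]
    {f : ℕ → Ω → ℝ} (hf : Supermartingale f ℱ μ) {n : ℕ} (hnonneg : ∀ k ≤ n, 0 ≤ᵐ[μ] f k)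
    {lam : ℝ} (hlam : 0 ≤ lam) :
    lam * μ.real {ω | ∃ k ≤ n, lam ≤ f k ω} ≤ ∫ ω, f 0 ω ∂μ := by
  set τ : Ω → WithTop ℕ := fun ω => (hittingBtwn f (Set.Ici lam) 0 n ω : ℕ)
  have hτ : IsStoppingTime ℱ τ :=
    hf.stronglyAdapted.adapted.isStoppingTime_hittingBtwn measurableSet_Ici
  have hτ_le : ∀ ω, τ ω ≤ n := fun ω => WithTop.coe_le_coe.2 (hittingBtwn_le ω)
  have hsubset : {ω | ∃ k ≤ n, lam ≤ f k ω} ⊆ {ω | lam ≤ stoppedValue f τ ω} :=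
    fun ω ⟨k, hk, hfk⟩ => stoppedValue_hittingBtwn_mem ⟨k, ⟨k.zero_le, hk⟩, hfk⟩
  have hstopped_nonneg : 0 ≤ᵐ[μ] stoppedValue f τ := by
    filter_upwards [ae_all_iff.2 fun k : Fin (n + 1) => hnonneg k (Nat.lt_succ_iff.1 k.2)]
      with ω hω
    exact hω ⟨_, Nat.lt_succ_of_le (hittingBtwn_le ω)⟩
  calc lam * μ.real {ω | ∃ k ≤ n, lam ≤ f k ω}
      ≤ lam * μ.real {ω | lam ≤ stoppedValue f τ ω} := by
        gcongr
        exact measure_ne_top _ _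
    _ ≤ ∫ ω, stoppedValue f τ ω ∂μ :=
      mul_meas_ge_le_integral_of_nonneg hstopped_nonneg (hf.integrable_stoppedValue hτ hτ_le) lam
    _ ≤ ∫ ω, f 0 ω ∂μ :=
      hf.expected_stoppedValue_antitone (isStoppingTime_const ℱ 0) hτ (fun _ => zero_le) hτ_le

end MeasureTheory

/-- The c-martingale maximal inequality: if `(S k)` is a nonnegative, integrable, adapted
process with `𝔼[S (k+1) | ℱ k] ≤ S k + ψ` a.s. for a constant `ψ ≥ 0`, then for every
time horizon `T` and every `λ > 0`,
`ℙ{ max_{0 ≤ k ≤ T} S k ≥ λ } ≤ (𝔼[S 0] + ψ * T) / λ`. -/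
theorem cMartingale_maximal_inequality
    {Ω : Type*} {m0 : MeasurableSpace Ω} {μ : Measure Ω} [IsProbabilityMeasure μ]
    (ℱ : Filtration ℕ m0) (S : ℕ → Ω → ℝ) (ψ : ℝ) (hψ : 0 ≤ ψ)
    (hadapted : Adapted ℱ S)
    (hnonneg : ∀ k, 0 ≤ᵐ[μ] S k)
    (hint : ∀ k, Integrable (S k) μ)
    (hdrift : ∀ k, μ[S (k + 1) | ℱ k] ≤ᵐ[μ] fun ω => S k ω + ψ)
    (T : ℕ) (lam : ℝ) (hlam : 0 < lam) :
    μ {ω | ∃ k ≤ T, lam ≤ S k ω} ≤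
      ENNReal.ofReal (((∫ ω, S 0 ω ∂μ) + ψ * T) / lam) := by
  set g : ℕ → Ω → ℝ := fun k ω => S k ω - ψ * k + ψ * T with hg
  have hsuper : Supermartingale g ℱ μ :=
    (supermartingale_sub_drift hadapted hint hdrift).add_martingale (martingale_const ℱ μ _)
  have hS_le_g : ∀ k ≤ T, ∀ ω, S k ω ≤ g k ω := fun k hk ω => by
    have : ψ * k ≤ ψ * T := mul_le_mul_of_nonneg_left (Nat.cast_le.2 hk) hψ
    simp only [hg]
    linarith
  have hg_nonneg : ∀ k ≤ T, 0 ≤ᵐ[μ] g k := fun k hk => by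
    filter_upwards [hnonneg k] with ω hω
    exact hω.trans (hS_le_g k hk ω)
  have hg_zero : ∫ ω, g 0 ω ∂μ = (∫ ω, S 0 ω ∂μ) + ψ * T := by
    simp [hg, integral_add (hint 0) (integrable_const _)]
  have hmaximal : lam * μ.real {ω | ∃ k ≤ T, lam ≤ S k ω} ≤ (∫ ω, S 0 ω ∂μ) + ψ * T := by
    calc lam * μ.real {ω | ∃ k ≤ T, lam ≤ S k ω}
        ≤ lam * μ.real {ω | ∃ k ≤ T, lam ≤ g k ω} :=
          mul_le_mul_of_nonneg_left (measureReal_mono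
            (fun ω ⟨k, hk, hSk⟩ => ⟨k, hk, hSk.trans (hS_le_g k hk ω)⟩) (measure_ne_top _ _)) hlam.le
      _ ≤ _ := hg_zero ▸ hsuper.maximal_ineq hg_nonneg hlam.le
  rw [← ofReal_measureReal (measure_ne_top _ _)]
  exact ENNReal.ofReal_le_ofReal ((le_div_iff₀' hlam).2 hmaximal)
end

section
/- Let P ∈ ℝ^{n×n} be a symmetric positive-definite matrix, A ∈ ℝ^{n×n} with operator norm ‖A‖ ≤ L₁, B ∈ ℝ^{n×m} with operator norm ‖B‖ ≤ L₂, and fix u ∈ ℝ^m with ‖u‖ ≤ ĥ, x̂ ∈ ℝⁿ with ‖x̂‖ ≤ h, and ŷ ∈ ℝⁿ with ‖ŷ − (A x̂ + B u)‖ ≤ η, where L₁, L₂, ĥ, h, η ≥ 0. Then the function g₂(x) := (A x + B u − ŷ)ᵀ P (A x + B u − ŷ) − (x − x̂)ᵀ P (x − x̂) is Lipschitz continuous on the closed ball { x ∈ ℝⁿ : ‖x‖ ≤ h } with Lipschitz constant 2 λ_max(P) (2 L₁² h + 2 L₁ L₂ ĥ + L₁ η + 2 h). -/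
open MeasureTheory

lemma aux_eigen_quad {n : ℕ} (hn : 0 < n) {P : Matrix (Fin n) (Fin n) ℝ} (hP : P.PosDef)
    (a b : EuclideanSpace ℝ (Fin n)) :
    |(inner ℝ a (Matrix.toEuclideanLin P b) : ℝ)| ≤
      (⨆ i, hP.isHermitian.eigenvalues i) * (‖a‖ * ‖b‖) := by
  classical
  haveI : NeZero n := ⟨hn.ne'⟩
  set μ := (⨆ i, hP.isHermitian.eigenvalues i) with hμ
  set ob := hP.isHermitian.eigenvectorBasis with hob
  have heig : ∀ j, Matrix.toEuclideanLin P (ob j) =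
      hP.isHermitian.eigenvalues j • ob j := by
    intro j
    have := hP.isHermitian.mulVec_eigenvectorBasis j
    apply (WithLp.equiv 2 (Fin n → ℝ)).injective
    simpa [Matrix.toEuclideanLin_apply] using this
  have hexp : (inner ℝ a (Matrix.toEuclideanLin P b) : ℝ) =
      ∑ i, hP.isHermitian.eigenvalues i * ((inner ℝ a (ob i) : ℝ) * (inner ℝ (ob i) b : ℝ)) := by
    rw [← OrthonormalBasis.sum_inner_mul_inner ob a (Matrix.toEuclideanLin P b)]
    congr 1; ext i
    have h2 : (inner ℝ (ob i) (Matrix.toEuclideanLin P b) : ℝ) =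
        hP.isHermitian.eigenvalues i * (inner ℝ (ob i) b : ℝ) := by
      have hsym := (Matrix.isHermitian_iff_isSymmetric.mp hP.isHermitian)
      rw [← hsym (ob i) b, heig i, real_inner_smul_left]
    rw [h2]; ring
  have hμ_nonneg : ∀ i, 0 ≤ hP.isHermitian.eigenvalues i :=
    fun i => (hP.eigenvalues_pos i).le
  have hle : ∀ i, hP.isHermitian.eigenvalues i ≤ μ :=
    fun i => le_ciSup (Set.Finite.bddAbove (Set.finite_range _)) i
  have hμ0 : 0 ≤ μ := le_trans (hμ_nonneg ⟨0, hn⟩) (hle _)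
  have hna : ∑ i, |(inner ℝ a (ob i) : ℝ)| ^ 2 = ‖a‖ ^ 2 := by
    have := OrthonormalBasis.sum_inner_mul_inner ob a a
    rw [real_inner_self_eq_norm_sq] at this
    rw [← this]
    congr 1; ext i
    rw [sq_abs, real_inner_comm (ob i) a]; ring
  have hnb : ∑ i, |(inner ℝ (ob i) b : ℝ)| ^ 2 = ‖b‖ ^ 2 := by
    have := OrthonormalBasis.sum_inner_mul_inner ob b b
    rw [real_inner_self_eq_norm_sq] at this
    rw [← this]
    congr 1; ext i
    rw [sq_abs, real_inner_comm b (ob i)]; ring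
  have hcs : ∑ i, |(inner ℝ a (ob i) : ℝ)| * |(inner ℝ (ob i) b : ℝ)| ≤ ‖a‖ * ‖b‖ := by
    have h1 := Finset.sum_mul_sq_le_sq_mul_sq Finset.univ
      (fun i => |(inner ℝ a (ob i) : ℝ)|) (fun i => |(inner ℝ (ob i) b : ℝ)|)
    rw [hna, hnb] at h1
    have h2 : 0 ≤ ∑ i, |(inner ℝ a (ob i) : ℝ)| * |(inner ℝ (ob i) b : ℝ)| :=
      Finset.sum_nonneg fun i _ => by positivity
    nlinarith [norm_nonneg a, norm_nonneg b, mul_nonneg (norm_nonneg a) (norm_nonneg b)]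
  rw [hexp]
  calc |∑ i, hP.isHermitian.eigenvalues i * ((inner ℝ a (ob i) : ℝ) * (inner ℝ (ob i) b : ℝ))|
      ≤ ∑ i, |hP.isHermitian.eigenvalues i * ((inner ℝ a (ob i) : ℝ) * (inner ℝ (ob i) b : ℝ))| :=
        Finset.abs_sum_le_sum_abs _ _
    _ = ∑ i, hP.isHermitian.eigenvalues i * (|(inner ℝ a (ob i) : ℝ)| * |(inner ℝ (ob i) b : ℝ)|) := by
        congr 1; ext i; rw [abs_mul, abs_mul, abs_of_nonneg (hμ_nonneg i)]
    _ ≤ ∑ i, μ * (|(inner ℝ a (ob i) : ℝ)| * |(inner ℝ (ob i) b : ℝ)|) := by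
        apply Finset.sum_le_sum; intro i _
        exact mul_le_mul_of_nonneg_right (hle i) (by positivity)
    _ = μ * ∑ i, |(inner ℝ a (ob i) : ℝ)| * |(inner ℝ (ob i) b : ℝ)| := by
        rw [Finset.mul_sum]
    _ ≤ μ * (‖a‖ * ‖b‖) := mul_le_mul_of_nonneg_left hcs hμ0

lemma aux_polar {n : ℕ} {P : Matrix (Fin n) (Fin n) ℝ} (hP : P.IsHermitian)
    (p q : EuclideanSpace ℝ (Fin n)) :
    (inner ℝ p (Matrix.toEuclideanLin P p) : ℝ) - (inner ℝ q (Matrix.toEuclideanLin P q) : ℝ) =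
      (inner ℝ (p - q) (Matrix.toEuclideanLin P (p + q)) : ℝ) := by
  have hsym := Matrix.isHermitian_iff_isSymmetric.mp hP
  have h1 : (inner ℝ p (Matrix.toEuclideanLin P q) : ℝ) =
      (inner ℝ q (Matrix.toEuclideanLin P p) : ℝ) := by
    rw [← hsym p q, real_inner_comm]
  simp only [map_add, inner_add_right, inner_sub_left]
  linarith

lemma aux_opnorm {n m : ℕ} (M : Matrix (Fin n) (Fin m) ℝ) (L : ℝ)
    (hM : ‖LinearMap.toContinuousLinearMap (Matrix.toEuclideanLin M)‖ ≤ L)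
    (z : EuclideanSpace ℝ (Fin m)) : ‖Matrix.toEuclideanLin M z‖ ≤ L * ‖z‖ := by
  have h := (LinearMap.toContinuousLinearMap (Matrix.toEuclideanLin M)).le_opNorm z
  simp only [LinearMap.coe_toContinuousLinearMap'] at h
  exact h.trans (mul_le_mul_of_nonneg_right hM (norm_nonneg z))

set_option maxHeartbeats 1000000 in
/-- The `g₂`-part of Lemma 6 of the paper: for a linear system `x ↦ A x + B u` with
`‖A‖ ≤ L₁`, `‖B‖ ≤ L₂` (operator norms), `‖u‖ ≤ hU`, `‖x̂‖ ≤ h`,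
`‖ŷ - (A x̂ + B u)‖ ≤ η`, and a symmetric positive-definite `P`, the function
`g₂(x) = (A x + B u - ŷ)ᵀ P (A x + B u - ŷ) - (x - x̂)ᵀ P (x - x̂)` is Lipschitz on the
closed ball of radius `h` with constant `2 λ_max(P) (2 L₁² h + 2 L₁ L₂ hU + L₁ η + 2 h)`. -/
theorem g2_linear_lipschitz
    {n m : ℕ} (hn : 0 < n)
    (P : Matrix (Fin n) (Fin n) ℝ) (hP : P.PosDef)
    (A : Matrix (Fin n) (Fin n) ℝ) (B : Matrix (Fin n) (Fin m) ℝ)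
    (L₁ L₂ h hU η : ℝ)
    (hL₁ : 0 ≤ L₁) (hL₂ : 0 ≤ L₂) (hh : 0 ≤ h) (hhU : 0 ≤ hU) (hη : 0 ≤ η)
    (hA : ‖LinearMap.toContinuousLinearMap (Matrix.toEuclideanLin A)‖ ≤ L₁)
    (hB : ‖LinearMap.toContinuousLinearMap (Matrix.toEuclideanLin B)‖ ≤ L₂)
    (u : EuclideanSpace ℝ (Fin m)) (hu : ‖u‖ ≤ hU)
    (xhat : EuclideanSpace ℝ (Fin n)) (hxhat : ‖xhat‖ ≤ h)
    (yhat : EuclideanSpace ℝ (Fin n))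
    (hyhat : ‖yhat - (Matrix.toEuclideanLin A xhat + Matrix.toEuclideanLin B u)‖ ≤ η) :
    LipschitzOnWith
      (Real.toNNReal
        (2 * (⨆ i, hP.isHermitian.eigenvalues i) *
          (2 * L₁ ^ 2 * h + 2 * L₁ * L₂ * hU + L₁ * η + 2 * h)))
      (fun x : EuclideanSpace ℝ (Fin n) =>
        (inner ℝ (Matrix.toEuclideanLin A x + Matrix.toEuclideanLin B u - yhat)
          (Matrix.toEuclideanLin P
            (Matrix.toEuclideanLin A x + Matrix.toEuclideanLin B u - yhat)) : ℝ) -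
          (inner ℝ (x - xhat) (Matrix.toEuclideanLin P (x - xhat)) : ℝ))
      (Metric.closedBall 0 h) := by
  set μ := (⨆ i, hP.isHermitian.eigenvalues i) with hμdef
  have hμ0 : 0 ≤ μ := by
    have h1 : hP.isHermitian.eigenvalues ⟨0, hn⟩ ≤ μ :=
      le_ciSup (Set.Finite.bddAbove (Set.finite_range _)) _
    exact le_trans (hP.eigenvalues_pos ⟨0, hn⟩).le h1
  set K := 2 * μ * (2 * L₁ ^ 2 * h + 2 * L₁ * L₂ * hU + L₁ * η + 2 * h) with hKdef
  have hK0 : 0 ≤ K := by positivity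
  apply LipschitzOnWith.of_dist_le_mul
  intro x hx y hy
  rw [Metric.mem_closedBall, dist_zero_right] at hx hy
  rw [Real.dist_eq, dist_eq_norm, Real.coe_toNNReal _ hK0]
  beta_reduce
  set TA := Matrix.toEuclideanLin A with hTA
  set TB := Matrix.toEuclideanLin B with hTB
  set vx : EuclideanSpace ℝ (Fin n) := TA x + TB u - yhat with hvx
  set vy : EuclideanSpace ℝ (Fin n) := TA y + TB u - yhat with hvy
  -- norm bound for yhat
  have hyn : ‖yhat‖ ≤ L₁ * h + L₂ * hU + η := by
    have h1 : ‖yhat‖ ≤ ‖yhat - (TA xhat + TB u)‖ + ‖TA xhat + TB u‖ := by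
      exact (norm_le_norm_add_norm_sub' yhat (TA xhat + TB u)).trans_eq (add_comm _ _)
    have h2 : ‖TA xhat + TB u‖ ≤ L₁ * h + L₂ * hU := by
      refine (norm_add_le _ _).trans (add_le_add ?_ ?_)
      · exact (aux_opnorm A L₁ hA xhat).trans (by nlinarith)
      · exact (aux_opnorm B L₂ hB u).trans (by nlinarith)
    calc ‖yhat‖ ≤ ‖yhat - (TA xhat + TB u)‖ + ‖TA xhat + TB u‖ := h1
      _ ≤ η + (L₁ * h + L₂ * hU) := add_le_add hyhat h2
      _ = L₁ * h + L₂ * hU + η := by ring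
  have hvb : ∀ z : EuclideanSpace ℝ (Fin n), ‖z‖ ≤ h →
      ‖TA z + TB u - yhat‖ ≤ 2 * L₁ * h + 2 * L₂ * hU + η := by
    intro z hz
    have h1 : ‖TA z + TB u - yhat‖ ≤ ‖TA z‖ + ‖TB u‖ + ‖yhat‖ := by
      calc ‖TA z + TB u - yhat‖ ≤ ‖TA z + TB u‖ + ‖yhat‖ := norm_sub_le _ _
        _ ≤ ‖TA z‖ + ‖TB u‖ + ‖yhat‖ := by
            exact add_le_add (norm_add_le _ _) le_rfl
    have h2 : ‖TA z‖ ≤ L₁ * h := (aux_opnorm A L₁ hA z).trans (by nlinarith)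
    have h3 : ‖TB u‖ ≤ L₂ * hU := (aux_opnorm B L₂ hB u).trans (by nlinarith)
    calc ‖TA z + TB u - yhat‖ ≤ ‖TA z‖ + ‖TB u‖ + ‖yhat‖ := h1
      _ ≤ L₁ * h + L₂ * hU + (L₁ * h + L₂ * hU + η) := by linarith
      _ = 2 * L₁ * h + 2 * L₂ * hU + η := by ring
  -- the difference identity
  have hid : ((inner ℝ vx (Matrix.toEuclideanLin P vx) : ℝ) -
        (inner ℝ (x - xhat) (Matrix.toEuclideanLin P (x - xhat)) : ℝ)) -
      ((inner ℝ vy (Matrix.toEuclideanLin P vy) : ℝ) -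
        (inner ℝ (y - xhat) (Matrix.toEuclideanLin P (y - xhat)) : ℝ)) =
      (inner ℝ (vx - vy) (Matrix.toEuclideanLin P (vx + vy)) : ℝ) -
      (inner ℝ (x - y) (Matrix.toEuclideanLin P ((x - xhat) + (y - xhat))) : ℝ) := by
    have h1 := aux_polar hP.isHermitian vx vy
    have h2 := aux_polar hP.isHermitian (x - xhat) (y - xhat)
    have h3 : (x - xhat) - (y - xhat) = x - y := by abel
    rw [h3] at h2
    linarith
  have hv : vx - vy = TA (x - y) := by
    rw [hvx, hvy, map_sub]; abel
  -- main estimate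
  have e1 : |(inner ℝ (vx - vy) (Matrix.toEuclideanLin P (vx + vy)) : ℝ)| ≤
      μ * (L₁ * ‖x - y‖ * (2 * (2 * L₁ * h + 2 * L₂ * hU + η))) := by
    refine (aux_eigen_quad hn hP _ _).trans ?_
    have ha : ‖vx - vy‖ ≤ L₁ * ‖x - y‖ := by rw [hv]; exact aux_opnorm A L₁ hA _
    have hb : ‖vx + vy‖ ≤ 2 * (2 * L₁ * h + 2 * L₂ * hU + η) := by
      have := norm_add_le vx vy
      have h1 := hvb x hx
      have h2 := hvb y hy
      rw [← hvx] at h1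
      rw [← hvy] at h2
      linarith
    have := mul_le_mul ha hb (norm_nonneg _) (by positivity)
    nlinarith [norm_nonneg (vx - vy), norm_nonneg (vx + vy)]
  have e2 : |(inner ℝ (x - y) (Matrix.toEuclideanLin P ((x - xhat) + (y - xhat))) : ℝ)| ≤
      μ * (‖x - y‖ * (4 * h)) := by
    refine (aux_eigen_quad hn hP _ _).trans ?_
    have hb : ‖(x - xhat) + (y - xhat)‖ ≤ 4 * h := by
      have h1 : ‖x - xhat‖ ≤ 2 * h := (norm_sub_le _ _).trans (by linarith)
      have h2 : ‖y - xhat‖ ≤ 2 * h := (norm_sub_le _ _).trans (by linarith)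
      exact (norm_add_le _ _).trans (by linarith)
    have := mul_le_mul_of_nonneg_left hb (norm_nonneg (x - y))
    nlinarith
  calc |((inner ℝ vx (Matrix.toEuclideanLin P vx) : ℝ) -
        (inner ℝ (x - xhat) (Matrix.toEuclideanLin P (x - xhat)) : ℝ)) -
      ((inner ℝ vy (Matrix.toEuclideanLin P vy) : ℝ) -
        (inner ℝ (y - xhat) (Matrix.toEuclideanLin P (y - xhat)) : ℝ))|
      = |(inner ℝ (vx - vy) (Matrix.toEuclideanLin P (vx + vy)) : ℝ) -
          (inner ℝ (x - y) (Matrix.toEuclideanLin P ((x - xhat) + (y - xhat))) : ℝ)| := by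
        rw [hid]
    _ ≤ |(inner ℝ (vx - vy) (Matrix.toEuclideanLin P (vx + vy)) : ℝ)| +
        |(inner ℝ (x - y) (Matrix.toEuclideanLin P ((x - xhat) + (y - xhat))) : ℝ)| :=
        abs_sub _ _
    _ ≤ μ * (L₁ * ‖x - y‖ * (2 * (2 * L₁ * h + 2 * L₂ * hU + η))) +
        μ * (‖x - y‖ * (4 * h)) := add_le_add e1 e2
    _ = K * ‖x - y‖ := by rw [hKdef]; ring
end

section
/- Let P ∈ ℝ^{n×n} be a symmetric positive-definite matrix and fix x̂ ∈ ℝⁿ with ‖x̂‖ ≤ h, where h ≥ 0. Then the function g₁(x) := λ_min(P) ‖x − x̂‖² − (x − x̂)ᵀ P (x − x̂) is Lipschitz continuous on the closed ball { x ∈ ℝⁿ : ‖x‖ ≤ h } with Lipschitz constant 4 h (λ_min(P) + λ_max(P)). -/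
open MeasureTheory

lemma aux_symm {n : ℕ} (P : Matrix (Fin n) (Fin n) ℝ) (hP : P.IsHermitian)
    (x y : EuclideanSpace ℝ (Fin n)) :
    (inner ℝ (Matrix.toEuclideanLin P x) y : ℝ) = inner ℝ x (Matrix.toEuclideanLin P y) :=
  (Matrix.isHermitian_iff_isSymmetric.1 hP) x y

lemma aux_norm_le {n : ℕ} (P : Matrix (Fin n) (Fin n) ℝ) (hP : P.IsHermitian)
    (M : ℝ) (hM0 : 0 ≤ M) (hM : ∀ i, |hP.eigenvalues i| ≤ M)
    (v : EuclideanSpace ℝ (Fin n)) :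
    ‖Matrix.toEuclideanLin P v‖ ≤ M * ‖v‖ := by
  set b := hP.eigenvectorBasis
  have hb : ∀ i, Matrix.toEuclideanLin P (b i) = hP.eigenvalues i • b i := by
    intro i
    ext j
    have hj := congrFun (hP.mulVec_eigenvectorBasis i) j
    simpa [Matrix.toEuclideanLin_apply] using hj
  have hrepr : ∀ i, b.repr (Matrix.toEuclideanLin P v) i
      = hP.eigenvalues i * b.repr v i := by
    intro i
    rw [b.repr_apply_apply, b.repr_apply_apply, ← aux_symm P hP, hb i,
      inner_smul_left]
    simp
  have h1 : ‖Matrix.toEuclideanLin P v‖ ^ 2 ≤ (M * ‖v‖) ^ 2 := by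
    rw [← b.repr.norm_map (Matrix.toEuclideanLin P v), ← b.repr.norm_map v]
    rw [EuclideanSpace.norm_eq, EuclideanSpace.norm_eq]
    rw [Real.sq_sqrt (by positivity), mul_pow, Real.sq_sqrt (by positivity),
      Finset.mul_sum]
    apply Finset.sum_le_sum
    intro i _
    rw [hrepr i]
    have he : ‖hP.eigenvalues i * b.repr v i‖ ^ 2
        = (hP.eigenvalues i)^2 * ‖b.repr v i‖ ^ 2 := by
      rw [norm_mul, mul_pow, Real.norm_eq_abs, sq_abs]
    have h2 : (hP.eigenvalues i)^2 ≤ M^2 := by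
      rw [← sq_abs]
      exact pow_le_pow_left₀ (abs_nonneg _) (hM i) 2
    rw [he]
    exact mul_le_mul_of_nonneg_right h2 (by positivity)
  exact le_of_pow_le_pow_left₀ (by norm_num) (by positivity) h1

/-- The `g₁`-part of Lemmas 6 and 7 of the paper: for a symmetric positive-definite matrix
`P` and `‖x̂‖ ≤ h`, the function `g₁(x) = λ_min(P) ‖x - x̂‖² - (x - x̂)ᵀ P (x - x̂)` is
Lipschitz on the closed ball of radius `h` with constant `4 h (λ_min(P) + λ_max(P))`. -/
theorem g1_lipschitz
    {n : ℕ} (hn : 0 < n)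
    (P : Matrix (Fin n) (Fin n) ℝ) (hP : P.PosDef)
    (h : ℝ) (hh : 0 ≤ h)
    (xhat : EuclideanSpace ℝ (Fin n)) (hxhat : ‖xhat‖ ≤ h) :
    LipschitzOnWith
      (Real.toNNReal
        (4 * h * ((⨅ i, hP.isHermitian.eigenvalues i) + (⨆ i, hP.isHermitian.eigenvalues i))))
      (fun x : EuclideanSpace ℝ (Fin n) =>
        (⨅ i, hP.isHermitian.eigenvalues i) * ‖x - xhat‖ ^ 2 -
          (inner ℝ (x - xhat) (Matrix.toEuclideanLin P (x - xhat)) : ℝ))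
      (Metric.closedBall 0 h) := by
  have hne : Nonempty (Fin n) := ⟨⟨0, hn⟩⟩
  set lm := ⨅ i, hP.isHermitian.eigenvalues i with hlm
  set lM := ⨆ i, hP.isHermitian.eigenvalues i with hlM
  set A := Matrix.toEuclideanLin P with hA
  have hpos : ∀ i, 0 < hP.isHermitian.eigenvalues i := fun i => hP.eigenvalues_pos i
  have hlm0 : 0 ≤ lm := le_ciInf fun i => (hpos i).le
  have hle : ∀ i, hP.isHermitian.eigenvalues i ≤ lM :=
    fun i => le_ciSup (Set.Finite.bddAbove (Set.finite_range _)) i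
  have hlM0 : 0 ≤ lM := le_trans (hpos (Classical.arbitrary _)).le (hle _)
  have hMabs : ∀ i, |hP.isHermitian.eigenvalues i| ≤ lM :=
    fun i => by rw [abs_of_pos (hpos i)]; exact hle i
  have hop : ∀ v : EuclideanSpace ℝ (Fin n), ‖A v‖ ≤ lM * ‖v‖ :=
    fun v => aux_norm_le P hP.isHermitian lM hlM0 hMabs v
  have hK0 : 0 ≤ 4 * h * (lm + lM) := by
    apply mul_nonneg (by linarith) (by linarith)
  have key : ∀ u w : EuclideanSpace ℝ (Fin n), ‖u‖ ≤ 2*h → ‖w‖ ≤ 2*h →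
      |(lm * ‖u‖^2 - (inner ℝ u (A u) : ℝ)) - (lm * ‖w‖^2 - (inner ℝ w (A w) : ℝ))|
        ≤ 4*h*(lm+lM) * ‖u - w‖ := by
    intro u w hu hw
    have hd : |‖u‖ - ‖w‖| ≤ ‖u - w‖ := abs_norm_sub_norm_le u w
    have t0 : |‖u‖^2 - ‖w‖^2| ≤ ‖u - w‖ * (4*h) := by
      have h4 : |‖u‖ + ‖w‖| ≤ 4*h := by
        rw [abs_of_nonneg (by positivity)]; linarith
      calc |‖u‖^2 - ‖w‖^2| = |‖u‖ - ‖w‖| * |‖u‖ + ‖w‖| := by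
            rw [← abs_mul]; ring_nf
        _ ≤ ‖u - w‖ * (4*h) := mul_le_mul hd h4 (abs_nonneg _) (norm_nonneg _)
    have e1 : (inner ℝ u (A u) : ℝ) - inner ℝ w (A w)
        = (inner ℝ (u - w) (A u) : ℝ) + (inner ℝ w (A (u - w)) : ℝ) := by
      rw [map_sub, inner_sub_left, inner_sub_right]; ring
    have b1 : |(inner ℝ (u - w) (A u) : ℝ)| ≤ ‖u - w‖ * (lM * ‖u‖) := by
      refine le_trans (abs_real_inner_le_norm _ _) ?_
      exact mul_le_mul_of_nonneg_left (hop u) (norm_nonneg _)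
    have b2 : |(inner ℝ w (A (u - w)) : ℝ)| ≤ ‖w‖ * (lM * ‖u - w‖) := by
      refine le_trans (abs_real_inner_le_norm _ _) ?_
      exact mul_le_mul_of_nonneg_left (hop (u - w)) (norm_nonneg _)
    have step : |(lm * ‖u‖^2 - (inner ℝ u (A u) : ℝ)) - (lm * ‖w‖^2 - (inner ℝ w (A w) : ℝ))|
        ≤ lm * |‖u‖^2 - ‖w‖^2| + (|(inner ℝ (u - w) (A u) : ℝ)| + |(inner ℝ w (A (u - w)) : ℝ)|) := by
      have : (lm * ‖u‖^2 - (inner ℝ u (A u) : ℝ)) - (lm * ‖w‖^2 - (inner ℝ w (A w) : ℝ))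
          = lm * (‖u‖^2 - ‖w‖^2) - ((inner ℝ u (A u) : ℝ) - (inner ℝ w (A w) : ℝ)) := by ring
      rw [this, e1]
      refine le_trans (abs_sub _ _) ?_
      rw [abs_mul, abs_of_nonneg hlm0]
      exact add_le_add le_rfl (abs_add_le _ _)
    have hb1' : ‖u - w‖ * (lM * ‖u‖) ≤ ‖u - w‖ * (lM * (2*h)) := by
      gcongr
    have hb2' : ‖w‖ * (lM * ‖u - w‖) ≤ (2*h) * (lM * ‖u - w‖) := by
      have := norm_nonneg (u - w)
      gcongr
    have hlmt : lm * |‖u‖^2 - ‖w‖^2| ≤ lm * (‖u - w‖ * (4*h)) :=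
      mul_le_mul_of_nonneg_left t0 hlm0
    calc |(lm * ‖u‖^2 - (inner ℝ u (A u) : ℝ)) - (lm * ‖w‖^2 - (inner ℝ w (A w) : ℝ))|
        ≤ lm * (‖u - w‖ * (4*h)) + (‖u - w‖ * (lM * (2*h)) + (2*h) * (lM * ‖u - w‖)) := by
          have := add_le_add hlmt (add_le_add (le_trans b1 hb1') (le_trans b2 hb2'))
          linarith [step]
      _ = 4*h*(lm+lM) * ‖u - w‖ := by ring
  apply LipschitzOnWith.of_dist_le_mul
  intro x hx y hy
  rw [Metric.mem_closedBall, dist_zero_right] at hx hy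
  rw [Real.coe_toNNReal _ hK0, Real.dist_eq, dist_eq_norm]
  have hu : ‖x - xhat‖ ≤ 2*h := le_trans (norm_sub_le _ _) (by linarith)
  have hw : ‖y - xhat‖ ≤ 2*h := le_trans (norm_sub_le _ _) (by linarith)
  have hxy : x - xhat - (y - xhat) = x - y := by abel
  have := key (x - xhat) (y - xhat) hu hw
  rw [hxy] at this
  simpa using this
end

section
/- Let P ∈ ℝ^{n×n} be a symmetric positive-definite matrix. Let f : ℝⁿ → ℝⁿ be continuously differentiable with ‖f(x)‖ ≤ L_f and ‖Df(x)‖ ≤ L_x (operator norm of the Jacobian) for all x in the closed ball { x : ‖x‖ ≤ h }, where L_f, L_x, h ≥ 0 and the ball is convex. Fix x̂ with ‖x̂‖ ≤ h and ŷ ∈ ℝⁿ with ‖ŷ − f(x̂)‖ ≤ η, where η ≥ 0. Then the function g₂(x) := (f(x) − ŷ)ᵀ P (f(x) − ŷ) − (x − x̂)ᵀ P (x − x̂) is Lipschitz continuous on the closed ball { x ∈ ℝⁿ : ‖x‖ ≤ h } with Lipschitz constant 2 λ_max(P) (L_x (2 L_f + η) + 2 h). -/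
open MeasureTheory

lemma toEuclideanLin_eigenbasis {n : ℕ} (P : Matrix (Fin n) (Fin n) ℝ) (hP : P.IsHermitian) (i : Fin n) :
    Matrix.toEuclideanLin P (hP.eigenvectorBasis i) = hP.eigenvalues i • hP.eigenvectorBasis i := by
  have h := hP.mulVec_eigenvectorBasis i
  apply (WithLp.equiv 2 _).injective
  ext j
  have := congrFun h j
  simpa [Matrix.toEuclideanLin_apply] using this

lemma norm_toEuclideanLin_le {n : ℕ} (hn : 0 < n) (P : Matrix (Fin n) (Fin n) ℝ) (hP : P.PosDef)
    (z : EuclideanSpace ℝ (Fin n)) :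
    ‖Matrix.toEuclideanLin P z‖ ≤ (⨆ i, hP.isHermitian.eigenvalues i) * ‖z‖ := by
  set hA := hP.isHermitian
  set b := hA.eigenvectorBasis
  set μ := hA.eigenvalues
  set M : ℝ := ⨆ i, μ i with hM
  have hμpos : ∀ i, 0 < μ i := hP.eigenvalues_pos
  have hμM : ∀ i, μ i ≤ M := fun i => le_ciSup (Set.Finite.bddAbove (Set.finite_range μ)) i
  have hM0 : 0 ≤ M := le_trans (hμpos ⟨0, hn⟩).le (hμM _)
  have hsym : (Matrix.toEuclideanLin P).IsSymmetric :=
    Matrix.isHermitian_iff_isSymmetric.1 hA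
  have hrep : ∀ i, b.repr (Matrix.toEuclideanLin P z) i = μ i * b.repr z i := by
    intro i
    rw [b.repr_apply_apply, ← hsym (b i) z, toEuclideanLin_eigenbasis P hA i,
      inner_smul_left, b.repr_apply_apply]
    simp
    rfl
  have h1 : ‖Matrix.toEuclideanLin P z‖ = ‖b.repr (Matrix.toEuclideanLin P z)‖ :=
    (b.repr.norm_map _).symm
  have h2 : ‖z‖ = ‖b.repr z‖ := (b.repr.norm_map _).symm
  rw [h1, h2, EuclideanSpace.norm_eq, EuclideanSpace.norm_eq, ← Real.sqrt_sq hM0,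
    ← Real.sqrt_mul (sq_nonneg M)]
  apply Real.sqrt_le_sqrt
  rw [Finset.mul_sum]
  apply Finset.sum_le_sum
  intro i _
  rw [hrep i]
  calc ‖μ i * b.repr z i‖ ^ 2 = |μ i * b.repr z i| ^ 2 := by rw [Real.norm_eq_abs]
    _ ≤ |M * b.repr z i| ^ 2 := by
        apply pow_le_pow_left₀ (abs_nonneg _) _ 2
        rw [abs_mul, abs_mul]
        exact mul_le_mul_of_nonneg_right
          (by rw [abs_of_pos (hμpos i)]; exact (hμM i).trans (le_abs_self M)) (abs_nonneg _)
    _ = M ^ 2 * ‖b.repr z i‖ ^ 2 := by rw [abs_mul, mul_pow, Real.norm_eq_abs, sq_abs]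

lemma quad_diff_le {n : ℕ} (hn : 0 < n) (P : Matrix (Fin n) (Fin n) ℝ) (hP : P.PosDef)
    (u v : EuclideanSpace ℝ (Fin n)) :
    (inner ℝ u (Matrix.toEuclideanLin P u) : ℝ) - inner ℝ v (Matrix.toEuclideanLin P v) ≤
      (⨆ i, hP.isHermitian.eigenvalues i) * (‖u‖ + ‖v‖) * ‖u - v‖ := by
  have hsym : (Matrix.toEuclideanLin P).IsSymmetric :=
    Matrix.isHermitian_iff_isSymmetric.1 hP.isHermitian
  have key : (inner ℝ u (Matrix.toEuclideanLin P u) : ℝ) - inner ℝ v (Matrix.toEuclideanLin P v) =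
      inner ℝ (u - v) (Matrix.toEuclideanLin P (u + v)) := by
    have h1 : (inner ℝ v (Matrix.toEuclideanLin P u) : ℝ) = inner ℝ u (Matrix.toEuclideanLin P v) := by
      rw [← hsym v u, real_inner_comm]
    simp only [map_add, inner_sub_left, inner_add_right]
    ring_nf
    rw [h1]
    ring
  rw [key]
  calc (inner ℝ (u - v) (Matrix.toEuclideanLin P (u + v)) : ℝ)
      ≤ ‖u - v‖ * ‖Matrix.toEuclideanLin P (u + v)‖ := real_inner_le_norm _ _
    _ ≤ ‖u - v‖ * ((⨆ i, hP.isHermitian.eigenvalues i) * ‖u + v‖) := by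
        gcongr; exact norm_toEuclideanLin_le hn P hP _
    _ ≤ ‖u - v‖ * ((⨆ i, hP.isHermitian.eigenvalues i) * (‖u‖ + ‖v‖)) := by
        gcongr
        · have hμpos := hP.eigenvalues_pos ⟨0, hn⟩
          exact le_trans hμpos.le (le_ciSup (Set.Finite.bddAbove (Set.finite_range _)) _)
        · exact norm_add_le _ _
    _ = (⨆ i, hP.isHermitian.eigenvalues i) * (‖u‖ + ‖v‖) * ‖u - v‖ := by ring


/-- The `g₂`-part of Lemma 7 of the paper: for a continuously differentiable map `f` with
`‖f x‖ ≤ L_f` and `‖Df x‖ ≤ L_x` on the closed ball of radius `h`, `‖x̂‖ ≤ h`,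
`‖ŷ - f x̂‖ ≤ η`, and a symmetric positive-definite `P`, the function
`g₂(x) = (f x - ŷ)ᵀ P (f x - ŷ) - (x - x̂)ᵀ P (x - x̂)` is Lipschitz on the closed ball of
radius `h` with constant `2 λ_max(P) (L_x (2 L_f + η) + 2 h)`. -/
theorem g2_nonlinear_lipschitz
    {n : ℕ} (hn : 0 < n)
    (P : Matrix (Fin n) (Fin n) ℝ) (hP : P.PosDef)
    (f : EuclideanSpace ℝ (Fin n) → EuclideanSpace ℝ (Fin n))
    (hf : ContDiff ℝ 1 f)
    (Lf Lx h η : ℝ) (hLf : 0 ≤ Lf) (hLx : 0 ≤ Lx) (hh : 0 ≤ h) (hη : 0 ≤ η)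
    (hfb : ∀ x ∈ Metric.closedBall (0 : EuclideanSpace ℝ (Fin n)) h, ‖f x‖ ≤ Lf)
    (hdfb : ∀ x ∈ Metric.closedBall (0 : EuclideanSpace ℝ (Fin n)) h, ‖fderiv ℝ f x‖ ≤ Lx)
    (xhat : EuclideanSpace ℝ (Fin n)) (hxhat : ‖xhat‖ ≤ h)
    (yhat : EuclideanSpace ℝ (Fin n)) (hyhat : ‖yhat - f xhat‖ ≤ η) :
    LipschitzOnWith
      (Real.toNNReal
        (2 * (⨆ i, hP.isHermitian.eigenvalues i) * (Lx * (2 * Lf + η) + 2 * h)))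
      (fun x : EuclideanSpace ℝ (Fin n) =>
        (inner ℝ (f x - yhat) (Matrix.toEuclideanLin P (f x - yhat)) : ℝ) -
          (inner ℝ (x - xhat) (Matrix.toEuclideanLin P (x - xhat)) : ℝ))
      (Metric.closedBall 0 h) := by
  set M : ℝ := ⨆ i, hP.isHermitian.eigenvalues i with hMdef
  have hM0 : 0 ≤ M :=
    le_trans (hP.eigenvalues_pos ⟨0, hn⟩).le
      (le_ciSup (Set.Finite.bddAbove (Set.finite_range _)) _)
  set c : ℝ := 2 * M * (Lx * (2 * Lf + η) + 2 * h) with hcdef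
  have hxhat' : xhat ∈ Metric.closedBall (0 : EuclideanSpace ℝ (Fin n)) h := by
    simpa [Metric.mem_closedBall, dist_zero_right] using hxhat
  -- f is Lipschitz on the ball with constant Lx
  have hflip : ∀ x ∈ Metric.closedBall (0 : EuclideanSpace ℝ (Fin n)) h,
      ∀ y ∈ Metric.closedBall (0 : EuclideanSpace ℝ (Fin n)) h,
      ‖f x - f y‖ ≤ Lx * ‖x - y‖ := by
    intro x hx y hy
    exact (convex_closedBall _ _).norm_image_sub_le_of_norm_fderiv_le
      (fun z _ => hf.differentiable one_ne_zero z) hdfb hy hx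
  apply LipschitzOnWith.of_dist_le_mul
  intro x hx y hy
  have hxn : ‖x‖ ≤ h := by simpa [Metric.mem_closedBall, dist_zero_right] using hx
  have hyn : ‖y‖ ≤ h := by simpa [Metric.mem_closedBall, dist_zero_right] using hy
  -- bounds
  have hub : ∀ z ∈ Metric.closedBall (0 : EuclideanSpace ℝ (Fin n)) h,
      ‖f z - yhat‖ ≤ 2 * Lf + η := by
    intro z hz
    calc ‖f z - yhat‖ = ‖(f z - f xhat) - (yhat - f xhat)‖ := by
          congr 1; abel
      _ ≤ ‖f z - f xhat‖ + ‖yhat - f xhat‖ := norm_sub_le _ _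
      _ ≤ (‖f z‖ + ‖f xhat‖) + η := by gcongr; exact norm_sub_le _ _
      _ ≤ (Lf + Lf) + η := by gcongr <;> [exact hfb z hz; exact hfb xhat hxhat']
      _ = 2 * Lf + η := by ring
  have key : ∀ u v p q : EuclideanSpace ℝ (Fin n),
      ((inner ℝ u (Matrix.toEuclideanLin P u) : ℝ) - inner ℝ p (Matrix.toEuclideanLin P p)) -
        ((inner ℝ v (Matrix.toEuclideanLin P v) : ℝ) - inner ℝ q (Matrix.toEuclideanLin P q)) ≤
      M * (‖u‖ + ‖v‖) * ‖u - v‖ + M * (‖p‖ + ‖q‖) * ‖p - q‖ := by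
    intro u v p q
    have h1 := quad_diff_le hn P hP u v
    have h2 := quad_diff_le hn P hP q p
    rw [← hMdef] at h1 h2
    have : ‖q - p‖ = ‖p - q‖ := norm_sub_rev _ _
    rw [this] at h2
    linarith [h2]
  have habs : ∀ a b : ℝ, a - b ≤ c * ‖x - y‖ → b - a ≤ c * ‖x - y‖ → |a - b| ≤ c * ‖x - y‖ :=
    fun a b h1 h2 => abs_sub_le_iff.2 ⟨h1, h2⟩
  have main : ∀ x' ∈ Metric.closedBall (0 : EuclideanSpace ℝ (Fin n)) h,
      ∀ y' ∈ Metric.closedBall (0 : EuclideanSpace ℝ (Fin n)) h,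
      ((inner ℝ (f x' - yhat) (Matrix.toEuclideanLin P (f x' - yhat)) : ℝ) -
          inner ℝ (x' - xhat) (Matrix.toEuclideanLin P (x' - xhat))) -
        ((inner ℝ (f y' - yhat) (Matrix.toEuclideanLin P (f y' - yhat)) : ℝ) -
          inner ℝ (y' - xhat) (Matrix.toEuclideanLin P (y' - xhat))) ≤ c * ‖x' - y'‖ := by
    intro x' hx' y' hy'
    have hk := key (f x' - yhat) (f y' - yhat) (x' - xhat) (y' - xhat)
    have e1 : (f x' - yhat) - (f y' - yhat) = f x' - f y' := by abel
    have e2 : (x' - xhat) - (y' - xhat) = x' - y' := by abel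
    rw [e1, e2] at hk
    refine hk.trans ?_
    have hx'n : ‖x'‖ ≤ h := by simpa [Metric.mem_closedBall, dist_zero_right] using hx'
    have hy'n : ‖y'‖ ≤ h := by simpa [Metric.mem_closedBall, dist_zero_right] using hy'
    have b1 : ‖f x' - yhat‖ + ‖f y' - yhat‖ ≤ 2 * (2 * Lf + η) := by
      have := hub x' hx'; have := hub y' hy'; linarith
    have b2 : ‖x' - xhat‖ + ‖y' - xhat‖ ≤ 4 * h := by
      have n1 : ‖x' - xhat‖ ≤ ‖x'‖ + ‖xhat‖ := norm_sub_le _ _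
      have n2 : ‖y' - xhat‖ ≤ ‖y'‖ + ‖xhat‖ := norm_sub_le _ _
      linarith
    have b3 : ‖f x' - f y'‖ ≤ Lx * ‖x' - y'‖ := hflip x' hx' y' hy'
    calc M * (‖f x' - yhat‖ + ‖f y' - yhat‖) * ‖f x' - f y'‖
          + M * (‖x' - xhat‖ + ‖y' - xhat‖) * ‖x' - y'‖
        ≤ M * (2 * (2 * Lf + η)) * (Lx * ‖x' - y'‖) + M * (4 * h) * ‖x' - y'‖ := by
          gcongr <;> positivity
      _ = c * ‖x' - y'‖ := by rw [hcdef]; ring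
  have := habs _ _ (main x hx y hy) (by
    have := main y hy x hx
    rwa [norm_sub_rev] at this)
  calc dist ((inner ℝ (f x - yhat) (Matrix.toEuclideanLin P (f x - yhat)) : ℝ) -
          inner ℝ (x - xhat) (Matrix.toEuclideanLin P (x - xhat)))
        ((inner ℝ (f y - yhat) (Matrix.toEuclideanLin P (f y - yhat)) : ℝ) -
          inner ℝ (y - xhat) (Matrix.toEuclideanLin P (y - xhat)))
      ≤ c * ‖x - y‖ := by rw [Real.dist_eq]; exact this
    _ = c * dist x y := by rw [dist_eq_norm]
    _ ≤ (Real.toNNReal c : ℝ) * dist x y := by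
        gcongr
        exact le_max_left _ _ |>.trans_eq (Real.coe_toNNReal' c).symm
end

section
/- Let P ∈ ℝ^{n×n} be a symmetric positive-definite matrix, A ∈ ℝ^{n×n} with ‖A‖ ≤ L₁, B ∈ ℝ^{n×m} with ‖B‖ ≤ L₂, and fix u ∈ ℝ^m with ‖u‖ ≤ ĥ, x̂ ∈ ℝⁿ with ‖x̂‖ ≤ h, and ŷ ∈ ℝⁿ with ‖ŷ − (A x̂ + B u)‖ ≤ η, where L₁, L₂, ĥ, h, η ≥ 0. Define on the closed ball { x : ‖x‖ ≤ h } the functions g₁(x) := λ_min(P) ‖x − x̂‖² − (x − x̂)ᵀ P (x − x̂) and g₂(x) := (A x + B u − ŷ)ᵀ P (A x + B u − ŷ) − (x − x̂)ᵀ P (x − x̂). Then the function g(x) := max{ g₁(x), g₂(x) } is Lipschitz continuous on { x : ‖x‖ ≤ h } with Lipschitz constant L_g := max{ 4 h (λ_min(P) + λ_max(P)), 2 λ_max(P) (2 L₁² h + 2 L₁ L₂ ĥ + L₁ η + 2 h) }. -/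
open MeasureTheory


private lemma aux_repr_P {n : ℕ} {P : Matrix (Fin n) (Fin n) ℝ} (hP : P.IsHermitian)
    (v : EuclideanSpace ℝ (Fin n)) (i : Fin n) :
    hP.eigenvectorBasis.repr (Matrix.toEuclideanLin P v) i =
      hP.eigenvalues i * hP.eigenvectorBasis.repr v i := by
  rw [OrthonormalBasis.repr_apply_apply, OrthonormalBasis.repr_apply_apply]
  have hsym := (Matrix.isHermitian_iff_isSymmetric).1 hP
  rw [← hsym (hP.eigenvectorBasis i) v]
  have hb : Matrix.toEuclideanLin P (hP.eigenvectorBasis i)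
      = hP.eigenvalues i • (hP.eigenvectorBasis i) := by
    ext j
    have := congrFun (hP.mulVec_eigenvectorBasis i) j
    simpa [Matrix.toEuclideanLin_apply] using this
  rw [hb, real_inner_smul_left]

private lemma aux_norm_P_le {n : ℕ} {P : Matrix (Fin n) (Fin n) ℝ} (hP : P.IsHermitian)
    {c : ℝ} (hc : 0 ≤ c) (hev : ∀ i, |hP.eigenvalues i| ≤ c)
    (v : EuclideanSpace ℝ (Fin n)) :
    ‖Matrix.toEuclideanLin P v‖ ≤ c * ‖v‖ := by
  set b := hP.eigenvectorBasis
  have h1 : ‖Matrix.toEuclideanLin P v‖ ^ 2 ≤ (c * ‖v‖) ^ 2 := by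
    rw [← b.repr.norm_map (Matrix.toEuclideanLin P v), ← b.repr.norm_map v]
    rw [EuclideanSpace.norm_eq, EuclideanSpace.norm_eq]
    rw [Real.sq_sqrt (by positivity), mul_pow, Real.sq_sqrt (by positivity)]
    rw [Finset.mul_sum]
    refine Finset.sum_le_sum fun i _ => ?_
    rw [aux_repr_P hP v i]
    have : ‖hP.eigenvalues i * b.repr v i‖ ^ 2
        = (hP.eigenvalues i) ^ 2 * ‖b.repr v i‖ ^ 2 := by
      rw [norm_mul, mul_pow]; rw [Real.norm_eq_abs, sq_abs]
    rw [this]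
    have h2 : (hP.eigenvalues i) ^ 2 ≤ c ^ 2 := by
      rw [← sq_abs]; exact pow_le_pow_left₀ (abs_nonneg _) (hev i) 2
    nlinarith [sq_nonneg (‖b.repr v i‖), norm_nonneg (b.repr v i)]
  have := Real.sqrt_le_sqrt h1
  rwa [Real.sqrt_sq (norm_nonneg _), Real.sqrt_sq (by positivity)] at this

private lemma aux_inner_P_le {n : ℕ} {P : Matrix (Fin n) (Fin n) ℝ} (hP : P.IsHermitian)
    {c : ℝ} (hc : 0 ≤ c) (hev : ∀ i, |hP.eigenvalues i| ≤ c)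
    (w v : EuclideanSpace ℝ (Fin n)) :
    |(inner ℝ w (Matrix.toEuclideanLin P v) : ℝ)| ≤ c * ‖w‖ * ‖v‖ := by
  calc |(inner ℝ w (Matrix.toEuclideanLin P v) : ℝ)|
      ≤ ‖w‖ * ‖Matrix.toEuclideanLin P v‖ := abs_real_inner_le_norm _ _
    _ ≤ ‖w‖ * (c * ‖v‖) :=
        mul_le_mul_of_nonneg_left (aux_norm_P_le hP hc hev v) (norm_nonneg _)
    _ = c * ‖w‖ * ‖v‖ := by ring

private lemma aux_quad_diff {n : ℕ} {P : Matrix (Fin n) (Fin n) ℝ} (hP : P.IsHermitian)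
    {c : ℝ} (hc : 0 ≤ c) (hev : ∀ i, |hP.eigenvalues i| ≤ c)
    (v w : EuclideanSpace ℝ (Fin n)) :
    |(inner ℝ v (Matrix.toEuclideanLin P v) : ℝ) - (inner ℝ w (Matrix.toEuclideanLin P w) : ℝ)|
      ≤ c * ‖v + w‖ * ‖v - w‖ := by
  have hsym := (Matrix.isHermitian_iff_isSymmetric).1 hP
  have key : (inner ℝ v (Matrix.toEuclideanLin P v) : ℝ) - inner ℝ w (Matrix.toEuclideanLin P w)
      = (inner ℝ (v + w) (Matrix.toEuclideanLin P (v - w)) : ℝ) := by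
    rw [map_sub, inner_add_left, inner_sub_right, inner_sub_right]
    have h1 : (inner ℝ v (Matrix.toEuclideanLin P w) : ℝ)
        = inner ℝ w (Matrix.toEuclideanLin P v) := by
      rw [← hsym w v, real_inner_comm]
    linarith [h1]
  rw [key]
  exact aux_inner_P_le hP hc hev _ _

set_option maxHeartbeats 1000000 in
/-- Lemma 6 of the paper in full: for a linear system `x ↦ A x + B u` with `‖A‖ ≤ L₁`,
`‖B‖ ≤ L₂`, `‖u‖ ≤ hU`, `‖x̂‖ ≤ h`, `‖ŷ - (A x̂ + B u)‖ ≤ η`, and a symmetric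
positive-definite `P`, the pointwise maximum `g(x) = max {g₁(x), g₂(x)}` of
`g₁(x) = λ_min(P) ‖x - x̂‖² - (x - x̂)ᵀ P (x - x̂)` and
`g₂(x) = (A x + B u - ŷ)ᵀ P (A x + B u - ŷ) - (x - x̂)ᵀ P (x - x̂)` is Lipschitz on the
closed ball of radius `h` with constant
`max { 4 h (λ_min(P) + λ_max(P)), 2 λ_max(P) (2 L₁² h + 2 L₁ L₂ hU + L₁ η + 2 h) }`. -/
theorem scenario_constraint_linear_lipschitz
    {n m : ℕ} (hn : 0 < n)
    (P : Matrix (Fin n) (Fin n) ℝ) (hP : P.PosDef)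
    (A : Matrix (Fin n) (Fin n) ℝ) (B : Matrix (Fin n) (Fin m) ℝ)
    (L₁ L₂ h hU η : ℝ)
    (hL₁ : 0 ≤ L₁) (hL₂ : 0 ≤ L₂) (hh : 0 ≤ h) (hhU : 0 ≤ hU) (hη : 0 ≤ η)
    (hA : ‖LinearMap.toContinuousLinearMap (Matrix.toEuclideanLin A)‖ ≤ L₁)
    (hB : ‖LinearMap.toContinuousLinearMap (Matrix.toEuclideanLin B)‖ ≤ L₂)
    (u : EuclideanSpace ℝ (Fin m)) (hu : ‖u‖ ≤ hU)
    (xhat : EuclideanSpace ℝ (Fin n)) (hxhat : ‖xhat‖ ≤ h)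
    (yhat : EuclideanSpace ℝ (Fin n))
    (hyhat : ‖yhat - (Matrix.toEuclideanLin A xhat + Matrix.toEuclideanLin B u)‖ ≤ η) :
    LipschitzOnWith
      (Real.toNNReal
        (max
          (4 * h * ((⨅ i, hP.isHermitian.eigenvalues i) + (⨆ i, hP.isHermitian.eigenvalues i)))
          (2 * (⨆ i, hP.isHermitian.eigenvalues i) *
            (2 * L₁ ^ 2 * h + 2 * L₁ * L₂ * hU + L₁ * η + 2 * h))))
      (fun x : EuclideanSpace ℝ (Fin n) =>
        max
          ((⨅ i, hP.isHermitian.eigenvalues i) * ‖x - xhat‖ ^ 2 -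
            (inner ℝ (x - xhat) (Matrix.toEuclideanLin P (x - xhat)) : ℝ))
          ((inner ℝ (Matrix.toEuclideanLin A x + Matrix.toEuclideanLin B u - yhat)
            (Matrix.toEuclideanLin P
              (Matrix.toEuclideanLin A x + Matrix.toEuclideanLin B u - yhat)) : ℝ) -
            (inner ℝ (x - xhat) (Matrix.toEuclideanLin P (x - xhat)) : ℝ)))
      (Metric.closedBall 0 h) := by
  have hne : Nonempty (Fin n) := ⟨⟨0, hn⟩⟩
  set ev := hP.isHermitian.eigenvalues with hev_def
  set lmin := ⨅ i, ev i with hlmin_def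
  set lmax := ⨆ i, ev i with hlmax_def
  have hevpos : ∀ i, 0 < ev i := fun i => hP.eigenvalues_pos i
  have hlev : ∀ i, ev i ≤ lmax := fun i =>
    le_ciSup (Set.Finite.bddAbove (Set.finite_range _)) i
  have hlmin0 : 0 ≤ lmin := le_ciInf fun i => (hevpos i).le
  have hlmax0 : 0 ≤ lmax := le_trans (hevpos ⟨0, hn⟩).le (hlev _)
  have habs : ∀ i, |ev i| ≤ lmax := fun i => by
    rw [abs_of_pos (hevpos i)]; exact hlev i
  have hml : lmin ≤ lmax :=
    le_trans (ciInf_le (Set.Finite.bddBelow (Set.finite_range _)) ⟨0, hn⟩) (hlev _)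
  set K₁ := 4 * h * (lmin + lmax) with hK₁_def
  set K₂ := 2 * lmax * (2 * L₁ ^ 2 * h + 2 * L₁ * L₂ * hU + L₁ * η + 2 * h) with hK₂_def
  have hK₁0 : 0 ≤ K₁ := by positivity
  have hK₂0 : 0 ≤ K₂ := by positivity
  have hK0 : 0 ≤ max K₁ K₂ := le_trans hK₁0 (le_max_left _ _)
  -- operator bounds
  have hAz : ∀ z : EuclideanSpace ℝ (Fin n), ‖Matrix.toEuclideanLin A z‖ ≤ L₁ * ‖z‖ := by
    intro z
    have h1 := (LinearMap.toContinuousLinearMap (Matrix.toEuclideanLin A)).le_opNorm z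
    have h2 : (LinearMap.toContinuousLinearMap (Matrix.toEuclideanLin A)) z
        = Matrix.toEuclideanLin A z := rfl
    rw [h2] at h1
    exact h1.trans (mul_le_mul_of_nonneg_right hA (norm_nonneg z))
  have hBu : ‖Matrix.toEuclideanLin B u‖ ≤ L₂ * hU := by
    have h1 := (LinearMap.toContinuousLinearMap (Matrix.toEuclideanLin B)).le_opNorm u
    have h2 : (LinearMap.toContinuousLinearMap (Matrix.toEuclideanLin B)) u
        = Matrix.toEuclideanLin B u := rfl
    rw [h2] at h1
    exact h1.trans (mul_le_mul hB hu (norm_nonneg u) hL₂)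
  have hyn : ‖yhat‖ ≤ L₁ * h + L₂ * hU + η := by
    have h1 : ‖yhat‖ ≤ ‖yhat - (Matrix.toEuclideanLin A xhat + Matrix.toEuclideanLin B u)‖
        + ‖Matrix.toEuclideanLin A xhat + Matrix.toEuclideanLin B u‖ := by
      calc ‖yhat‖ = ‖(yhat - (Matrix.toEuclideanLin A xhat + Matrix.toEuclideanLin B u))
          + (Matrix.toEuclideanLin A xhat + Matrix.toEuclideanLin B u)‖ := by
            rw [sub_add_cancel]
        _ ≤ _ := norm_add_le _ _
    have h2 : ‖Matrix.toEuclideanLin A xhat + Matrix.toEuclideanLin B u‖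
        ≤ L₁ * h + L₂ * hU := by
      refine (norm_add_le _ _).trans (add_le_add ?_ hBu)
      exact (hAz xhat).trans (mul_le_mul_of_nonneg_left hxhat hL₁)
    linarith
  apply LipschitzOnWith.of_dist_le_mul
  intro x hx y hy
  rw [Real.coe_toNNReal _ hK0]
  rw [Metric.mem_closedBall, dist_zero_right] at hx hy
  simp only [Real.dist_eq]
  set d := dist x y with hd_def
  have hd : d = ‖x - y‖ := dist_eq_norm x y
  have hd0 : 0 ≤ d := dist_nonneg
  set qx : ℝ := inner ℝ (x - xhat) (Matrix.toEuclideanLin P (x - xhat)) with hqx_def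
  set qy : ℝ := inner ℝ (y - xhat) (Matrix.toEuclideanLin P (y - xhat)) with hqy_def
  set rx : ℝ := inner ℝ (Matrix.toEuclideanLin A x + Matrix.toEuclideanLin B u - yhat)
    (Matrix.toEuclideanLin P (Matrix.toEuclideanLin A x + Matrix.toEuclideanLin B u - yhat))
    with hrx_def
  set ry : ℝ := inner ℝ (Matrix.toEuclideanLin A y + Matrix.toEuclideanLin B u - yhat)
    (Matrix.toEuclideanLin P (Matrix.toEuclideanLin A y + Matrix.toEuclideanLin B u - yhat))
    with hry_def
  set a := ‖x - xhat‖ with ha_def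
  set b := ‖y - xhat‖ with hb_def
  have ha0 : 0 ≤ a := norm_nonneg _
  have hb0 : 0 ≤ b := norm_nonneg _
  have ha2 : a ≤ 2 * h := (norm_sub_le _ _).trans (by linarith)
  have hb2 : b ≤ 2 * h := (norm_sub_le _ _).trans (by linarith)
  have hxy : (x - xhat) - (y - xhat) = x - y := by abel
  have hab : |a - b| ≤ d := by
    rw [hd, ha_def, hb_def, ← hxy]
    exact abs_norm_sub_norm_le _ _
  have hsum1 : ‖(x - xhat) + (y - xhat)‖ ≤ 4 * h := (norm_add_le _ _).trans (by linarith)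
  -- bound for the common quadratic part
  have hQ : |qx - qy| ≤ lmax * (4 * h) * d := by
    have h1 := aux_quad_diff hP.isHermitian hlmax0 habs (x - xhat) (y - xhat)
    rw [hxy, ← hd] at h1
    refine h1.trans ?_
    exact mul_le_mul_of_nonneg_right (mul_le_mul_of_nonneg_left hsum1 hlmax0) hd0
  -- bound for g₁ difference
  have hg1 : |(lmin * a ^ 2 - qx) - (lmin * b ^ 2 - qy)| ≤ K₁ * d := by
    have hsq : |a ^ 2 - b ^ 2| ≤ 4 * h * d := by
      have e : a ^ 2 - b ^ 2 = (a + b) * (a - b) := by ring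
      rw [e, abs_mul, abs_of_nonneg (by linarith : (0:ℝ) ≤ a + b)]
      exact mul_le_mul (by linarith) hab (abs_nonneg _) (by linarith)
    have h1 : |lmin * (a ^ 2 - b ^ 2)| ≤ lmin * (4 * h * d) := by
      rw [abs_mul, abs_of_nonneg hlmin0]
      exact mul_le_mul_of_nonneg_left hsq hlmin0
    have e2 : (lmin * a ^ 2 - qx) - (lmin * b ^ 2 - qy)
        = lmin * (a ^ 2 - b ^ 2) - (qx - qy) := by ring
    have eK : lmin * (4 * h * d) + lmax * (4 * h) * d = K₁ * d := by rw [hK₁_def]; ring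
    rw [e2, abs_le]
    have h1' := abs_le.mp h1
    have hQ' := abs_le.mp hQ
    constructor <;> [linarith; linarith]
  -- bound for g₂ difference
  have hsubv : (Matrix.toEuclideanLin A x + Matrix.toEuclideanLin B u - yhat)
      - (Matrix.toEuclideanLin A y + Matrix.toEuclideanLin B u - yhat)
      = Matrix.toEuclideanLin A (x - y) := by
    rw [map_sub]; abel
  have hsubn : ‖(Matrix.toEuclideanLin A x + Matrix.toEuclideanLin B u - yhat)
      - (Matrix.toEuclideanLin A y + Matrix.toEuclideanLin B u - yhat)‖ ≤ L₁ * d := by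
    rw [hsubv, hd]; exact hAz (x - y)
  have hvxn : ‖Matrix.toEuclideanLin A x + Matrix.toEuclideanLin B u - yhat‖
      ≤ 2 * L₁ * h + 2 * L₂ * hU + η := by
    have := (norm_sub_le (Matrix.toEuclideanLin A x + Matrix.toEuclideanLin B u) yhat).trans
      (add_le_add ((norm_add_le _ _).trans
        (add_le_add ((hAz x).trans (mul_le_mul_of_nonneg_left hx hL₁)) hBu)) hyn)
    linarith
  have hvyn : ‖Matrix.toEuclideanLin A y + Matrix.toEuclideanLin B u - yhat‖
      ≤ 2 * L₁ * h + 2 * L₂ * hU + η := by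
    have := (norm_sub_le (Matrix.toEuclideanLin A y + Matrix.toEuclideanLin B u) yhat).trans
      (add_le_add ((norm_add_le _ _).trans
        (add_le_add ((hAz y).trans (mul_le_mul_of_nonneg_left hy hL₁)) hBu)) hyn)
    linarith
  have hsumv : ‖(Matrix.toEuclideanLin A x + Matrix.toEuclideanLin B u - yhat)
      + (Matrix.toEuclideanLin A y + Matrix.toEuclideanLin B u - yhat)‖
      ≤ 4 * L₁ * h + 4 * L₂ * hU + 2 * η :=
    (norm_add_le _ _).trans (by linarith)
  have hQv : |rx - ry| ≤ lmax * (4 * L₁ * h + 4 * L₂ * hU + 2 * η) * (L₁ * d) := by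
    have h1 := aux_quad_diff hP.isHermitian hlmax0 habs
      (Matrix.toEuclideanLin A x + Matrix.toEuclideanLin B u - yhat)
      (Matrix.toEuclideanLin A y + Matrix.toEuclideanLin B u - yhat)
    rw [← hrx_def, ← hry_def] at h1
    refine h1.trans ?_
    calc lmax * ‖(Matrix.toEuclideanLin A x + Matrix.toEuclideanLin B u - yhat)
          + (Matrix.toEuclideanLin A y + Matrix.toEuclideanLin B u - yhat)‖
          * ‖(Matrix.toEuclideanLin A x + Matrix.toEuclideanLin B u - yhat)
          - (Matrix.toEuclideanLin A y + Matrix.toEuclideanLin B u - yhat)‖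
        ≤ lmax * (4 * L₁ * h + 4 * L₂ * hU + 2 * η)
          * ‖(Matrix.toEuclideanLin A x + Matrix.toEuclideanLin B u - yhat)
          - (Matrix.toEuclideanLin A y + Matrix.toEuclideanLin B u - yhat)‖ :=
          mul_le_mul_of_nonneg_right (mul_le_mul_of_nonneg_left hsumv hlmax0) (norm_nonneg _)
      _ ≤ lmax * (4 * L₁ * h + 4 * L₂ * hU + 2 * η) * (L₁ * d) :=
          mul_le_mul_of_nonneg_left hsubn (by positivity)
  have hg2 : |(rx - qx) - (ry - qy)| ≤ K₂ * d := by
    have eK : lmax * (4 * L₁ * h + 4 * L₂ * hU + 2 * η) * (L₁ * d) + lmax * (4 * h) * d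
        = K₂ * d := by rw [hK₂_def]; ring
    have e2 : (rx - qx) - (ry - qy) = (rx - ry) - (qx - qy) := by ring
    rw [e2, abs_le]
    have h1' := abs_le.mp hQv
    have hQ' := abs_le.mp hQ
    constructor <;> [linarith; linarith]
  -- combine
  calc |max (lmin * a ^ 2 - qx) (rx - qx) - max (lmin * b ^ 2 - qy) (ry - qy)|
      ≤ max |(lmin * a ^ 2 - qx) - (lmin * b ^ 2 - qy)| |(rx - qx) - (ry - qy)| :=
        abs_max_sub_max_le_max _ _ _ _
    _ ≤ max K₁ K₂ * d := by
        apply max_le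
        · exact hg1.trans (mul_le_mul_of_nonneg_right (le_max_left _ _) hd0)
        · exact hg2.trans (mul_le_mul_of_nonneg_right (le_max_right _ _) hd0)
end

section
/- Let P ∈ ℝ^{n×n} be a symmetric positive-definite matrix. Let f : ℝⁿ → ℝⁿ be continuously differentiable with ‖f(x)‖ ≤ L_f and ‖Df(x)‖ ≤ L_x for all x in the closed ball { x : ‖x‖ ≤ h }, where L_f, L_x, h ≥ 0. Fix x̂ with ‖x̂‖ ≤ h and ŷ ∈ ℝⁿ with ‖ŷ − f(x̂)‖ ≤ η, where η ≥ 0. Define on { x : ‖x‖ ≤ h } the functions g₁(x) := λ_min(P) ‖x − x̂‖² − (x − x̂)ᵀ P (x − x̂) and g₂(x) := (f(x) − ŷ)ᵀ P (f(x) − ŷ) − (x − x̂)ᵀ P (x − x̂). Then the function g(x) := max{ g₁(x), g₂(x) } is Lipschitz continuous on { x : ‖x‖ ≤ h } with Lipschitz constant L_g := max{ 4 h (λ_min(P) + λ_max(P)), 2 λ_max(P) (L_x (2 L_f + η) + 2 h) }. -/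
open MeasureTheory

open scoped RealInnerProductSpace

lemma key_inner_bound {n : ℕ} (hn : 0 < n) (P : Matrix (Fin n) (Fin n) ℝ) (hP : P.PosDef)
    (v w : EuclideanSpace ℝ (Fin n)) :
    |⟪v, Matrix.toEuclideanLin P w⟫| ≤ (⨆ i, hP.isHermitian.eigenvalues i) * (‖v‖ * ‖w‖) := by
  haveI : Nonempty (Fin n) := ⟨⟨0, hn⟩⟩
  set hA := hP.isHermitian
  set B := hA.eigenvectorBasis with hB
  set μ := hA.eigenvalues with hμ
  have hμ0 : ∀ j, 0 ≤ μ j := fun j => (hP.eigenvalues_pos j).le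
  have hμsup : ∀ j, μ j ≤ ⨆ i, μ i := fun j =>
    le_ciSup (Set.Finite.bddAbove (Set.finite_range μ)) j
  have hsup0 : 0 ≤ ⨆ i, μ i := le_trans (hμ0 (Classical.arbitrary _)) (hμsup _)
  have hPB : ∀ j, Matrix.toEuclideanLin P (B j) = μ j • (B j) := by
    intro j
    have h1 := hA.mulVec_eigenvectorBasis j
    ext i
    have := congrFun h1 i
    simpa [Matrix.toEuclideanLin_apply] using this
  have hPw : Matrix.toEuclideanLin P w = ∑ j, (μ j * ⟪B j, w⟫) • B j := by
    conv_lhs => rw [← B.sum_repr' w, map_sum]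
    refine Finset.sum_congr rfl fun j _ => ?_
    rw [_root_.map_smul, hPB j, smul_smul, mul_comm]
  have hexp : ⟪v, Matrix.toEuclideanLin P w⟫ = ∑ j, μ j * ⟪B j, w⟫ * ⟪v, B j⟫ := by
    rw [hPw, inner_sum]
    refine Finset.sum_congr rfl fun j _ => ?_
    rw [real_inner_smul_right]
  rw [hexp]
  calc |∑ j, μ j * ⟪B j, w⟫ * ⟪v, B j⟫| ≤ ∑ j, |μ j * ⟪B j, w⟫ * ⟪v, B j⟫| :=
        Finset.abs_sum_le_sum_abs _ _
    _ ≤ ∑ j, (⨆ i, μ i) * (|⟪v, B j⟫| * |⟪B j, w⟫|) := by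
        refine Finset.sum_le_sum fun j _ => ?_
        rw [abs_mul, abs_mul, abs_of_nonneg (hμ0 j)]
        calc μ j * |⟪B j, w⟫| * |⟪v, B j⟫| = μ j * (|⟪v, B j⟫| * |⟪B j, w⟫|) := by ring
          _ ≤ (⨆ i, μ i) * (|⟪v, B j⟫| * |⟪B j, w⟫|) := by
              apply mul_le_mul_of_nonneg_right (hμsup j) (by positivity)
    _ = (⨆ i, μ i) * ∑ j, |⟪v, B j⟫| * |⟪B j, w⟫| := by rw [Finset.mul_sum]
    _ ≤ (⨆ i, μ i) * (‖v‖ * ‖w‖) := by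
        apply mul_le_mul_of_nonneg_left _ hsup0
        have hCS := Real.sum_mul_le_sqrt_mul_sqrt Finset.univ
          (fun j => |⟪v, B j⟫|) (fun j => |⟪B j, w⟫|)
        refine hCS.trans_eq ?_
        have h1 : ∑ j, |⟪v, B j⟫| ^ 2 = ‖v‖ ^ 2 := by
          have := B.sum_inner_mul_inner v v
          rw [← real_inner_self_eq_norm_sq, ← this]
          refine Finset.sum_congr rfl fun j _ => ?_
          rw [sq_abs, sq, real_inner_comm]
        have h2 : ∑ j, |⟪B j, w⟫| ^ 2 = ‖w‖ ^ 2 := by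
          have := B.sum_inner_mul_inner w w
          rw [← real_inner_self_eq_norm_sq, ← this]
          refine Finset.sum_congr rfl fun j _ => ?_
          rw [sq_abs, sq, real_inner_comm]
        rw [h1, h2, Real.sqrt_sq (norm_nonneg _), Real.sqrt_sq (norm_nonneg _)]

lemma quad_diff {n : ℕ} (hn : 0 < n) (P : Matrix (Fin n) (Fin n) ℝ) (hP : P.PosDef)
    (a b : EuclideanSpace ℝ (Fin n)) :
    |(⟪a, Matrix.toEuclideanLin P a⟫ : ℝ) - ⟪b, Matrix.toEuclideanLin P b⟫| ≤
      (⨆ i, hP.isHermitian.eigenvalues i) * ((‖a‖ + ‖b‖) * ‖a - b‖) := by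
  have hsplit : (⟪a, Matrix.toEuclideanLin P a⟫ : ℝ) - ⟪b, Matrix.toEuclideanLin P b⟫
      = ⟪a - b, Matrix.toEuclideanLin P a⟫ + ⟪b, Matrix.toEuclideanLin P (a - b)⟫ := by
    rw [map_sub, inner_sub_left, inner_sub_right]; ring
  rw [hsplit]
  calc |⟪a - b, Matrix.toEuclideanLin P a⟫ + ⟪b, Matrix.toEuclideanLin P (a - b)⟫|
      ≤ |⟪a - b, Matrix.toEuclideanLin P a⟫| + |⟪b, Matrix.toEuclideanLin P (a - b)⟫| :=
        abs_add_le _ _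
    _ ≤ (⨆ i, hP.isHermitian.eigenvalues i) * (‖a - b‖ * ‖a‖)
        + (⨆ i, hP.isHermitian.eigenvalues i) * (‖b‖ * ‖a - b‖) :=
        add_le_add (key_inner_bound hn P hP _ _) (key_inner_bound hn P hP _ _)
    _ = (⨆ i, hP.isHermitian.eigenvalues i) * ((‖a‖ + ‖b‖) * ‖a - b‖) := by ring

set_option maxHeartbeats 1000000 in
/-- Lemma 7 of the paper in full: for a continuously differentiable map `f` with
`‖f x‖ ≤ L_f` and `‖Df x‖ ≤ L_x` on the closed ball of radius `h`, `‖x̂‖ ≤ h`,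
`‖ŷ - f x̂‖ ≤ η`, and a symmetric positive-definite `P`, the pointwise maximum
`g(x) = max {g₁(x), g₂(x)}` of
`g₁(x) = λ_min(P) ‖x - x̂‖² - (x - x̂)ᵀ P (x - x̂)` and
`g₂(x) = (f x - ŷ)ᵀ P (f x - ŷ) - (x - x̂)ᵀ P (x - x̂)` is Lipschitz on the closed ball of
radius `h` with constant
`max { 4 h (λ_min(P) + λ_max(P)), 2 λ_max(P) (L_x (2 L_f + η) + 2 h) }`. -/
theorem scenario_constraint_nonlinear_lipschitz
    {n : ℕ} (hn : 0 < n)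
    (P : Matrix (Fin n) (Fin n) ℝ) (hP : P.PosDef)
    (f : EuclideanSpace ℝ (Fin n) → EuclideanSpace ℝ (Fin n))
    (hf : ContDiff ℝ 1 f)
    (Lf Lx h η : ℝ) (hLf : 0 ≤ Lf) (hLx : 0 ≤ Lx) (hh : 0 ≤ h) (hη : 0 ≤ η)
    (hfb : ∀ x ∈ Metric.closedBall (0 : EuclideanSpace ℝ (Fin n)) h, ‖f x‖ ≤ Lf)
    (hdfb : ∀ x ∈ Metric.closedBall (0 : EuclideanSpace ℝ (Fin n)) h, ‖fderiv ℝ f x‖ ≤ Lx)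
    (xhat : EuclideanSpace ℝ (Fin n)) (hxhat : ‖xhat‖ ≤ h)
    (yhat : EuclideanSpace ℝ (Fin n)) (hyhat : ‖yhat - f xhat‖ ≤ η) :
    LipschitzOnWith
      (Real.toNNReal
        (max
          (4 * h * ((⨅ i, hP.isHermitian.eigenvalues i) + (⨆ i, hP.isHermitian.eigenvalues i)))
          (2 * (⨆ i, hP.isHermitian.eigenvalues i) * (Lx * (2 * Lf + η) + 2 * h))))
      (fun x : EuclideanSpace ℝ (Fin n) =>
        max
          ((⨅ i, hP.isHermitian.eigenvalues i) * ‖x - xhat‖ ^ 2 -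
            (inner ℝ (x - xhat) (Matrix.toEuclideanLin P (x - xhat)) : ℝ))
          ((inner ℝ (f x - yhat) (Matrix.toEuclideanLin P (f x - yhat)) : ℝ) -
            (inner ℝ (x - xhat) (Matrix.toEuclideanLin P (x - xhat)) : ℝ)))
      (Metric.closedBall 0 h) := by
  haveI : Nonempty (Fin n) := ⟨⟨0, hn⟩⟩
  set lmin := ⨅ i, hP.isHermitian.eigenvalues i with hlmin
  set lmax := ⨆ i, hP.isHermitian.eigenvalues i with hlmax
  have hμ0 : ∀ j, 0 ≤ hP.isHermitian.eigenvalues j := fun j => (hP.eigenvalues_pos j).le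
  have hmin0 : 0 ≤ lmin := le_ciInf hμ0
  have hmax0 : 0 ≤ lmax :=
    le_trans (hμ0 (Classical.arbitrary _))
      (le_ciSup (Set.Finite.bddAbove (Set.finite_range _)) _)
  set A := 4 * h * (lmin + lmax) with hA
  set Bc := 2 * lmax * (Lx * (2 * Lf + η) + 2 * h) with hBc
  have hA0 : 0 ≤ A := by positivity
  have hB0 : 0 ≤ Bc := by positivity
  rw [lipschitzOnWith_iff_dist_le_mul]
  intro x hx y hy
  rw [Real.coe_toNNReal _ (le_max_of_le_left hA0), Real.dist_eq, dist_eq_norm]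
  -- basic norm facts
  have hxh : ‖x‖ ≤ h := mem_closedBall_zero_iff.mp hx
  have hyh : ‖y‖ ≤ h := mem_closedBall_zero_iff.mp hy
  have hxx : ‖x - xhat‖ ≤ 2 * h := by
    calc ‖x - xhat‖ ≤ ‖x‖ + ‖xhat‖ := norm_sub_le _ _
      _ ≤ 2 * h := by linarith
  have hyx : ‖y - xhat‖ ≤ 2 * h := by
    calc ‖y - xhat‖ ≤ ‖y‖ + ‖xhat‖ := norm_sub_le _ _
      _ ≤ 2 * h := by linarith
  have hsub : (x - xhat) - (y - xhat) = x - y := by abel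
  have hnsub : ‖(x - xhat) - (y - xhat)‖ = ‖x - y‖ := by rw [hsub]
  -- the quadratic form differences
  have hq : |(⟪x - xhat, Matrix.toEuclideanLin P (x - xhat)⟫ : ℝ)
      - ⟪y - xhat, Matrix.toEuclideanLin P (y - xhat)⟫| ≤ lmax * (4 * h) * ‖x - y‖ := by
    refine (quad_diff hn P hP _ _).trans ?_
    rw [hnsub]
    rw [mul_assoc lmax]
    apply mul_le_mul_of_nonneg_left _ hmax0
    apply mul_le_mul_of_nonneg_right _ (norm_nonneg _)
    linarith
  -- g1 bound
  have hg1 : |(lmin * ‖x - xhat‖ ^ 2 - ⟪x - xhat, Matrix.toEuclideanLin P (x - xhat)⟫)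
      - (lmin * ‖y - xhat‖ ^ 2 - ⟪y - xhat, Matrix.toEuclideanLin P (y - xhat)⟫)|
      ≤ A * ‖x - y‖ := by
    have hsq : |‖x - xhat‖ ^ 2 - ‖y - xhat‖ ^ 2| ≤ 4 * h * ‖x - y‖ := by
      have hfact : ‖x - xhat‖ ^ 2 - ‖y - xhat‖ ^ 2
          = (‖x - xhat‖ + ‖y - xhat‖) * (‖x - xhat‖ - ‖y - xhat‖) := by ring
      rw [hfact, abs_mul, abs_of_nonneg (by positivity)]
      have h1 : |‖x - xhat‖ - ‖y - xhat‖| ≤ ‖x - y‖ := by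
        refine (abs_norm_sub_norm_le _ _).trans ?_
        rw [hsub]
      exact mul_le_mul (by linarith) h1 (abs_nonneg _) (by linarith)
    calc |(lmin * ‖x - xhat‖ ^ 2 - ⟪x - xhat, Matrix.toEuclideanLin P (x - xhat)⟫)
          - (lmin * ‖y - xhat‖ ^ 2 - ⟪y - xhat, Matrix.toEuclideanLin P (y - xhat)⟫)|
        ≤ |lmin * (‖x - xhat‖ ^ 2 - ‖y - xhat‖ ^ 2)|
          + |(⟪x - xhat, Matrix.toEuclideanLin P (x - xhat)⟫ : ℝ)
            - ⟪y - xhat, Matrix.toEuclideanLin P (y - xhat)⟫| := by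
          rw [show (lmin * ‖x - xhat‖ ^ 2 - ⟪x - xhat, Matrix.toEuclideanLin P (x - xhat)⟫)
            - (lmin * ‖y - xhat‖ ^ 2 - ⟪y - xhat, Matrix.toEuclideanLin P (y - xhat)⟫)
            = lmin * (‖x - xhat‖ ^ 2 - ‖y - xhat‖ ^ 2)
              - ((⟪x - xhat, Matrix.toEuclideanLin P (x - xhat)⟫ : ℝ)
                - ⟪y - xhat, Matrix.toEuclideanLin P (y - xhat)⟫) by ring]
          exact abs_sub _ _
      _ ≤ lmin * (4 * h * ‖x - y‖) + lmax * (4 * h) * ‖x - y‖ := by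
          refine add_le_add ?_ hq
          rw [abs_mul, abs_of_nonneg hmin0]
          exact mul_le_mul_of_nonneg_left hsq hmin0
      _ ≤ A * ‖x - y‖ := by rw [hA]; nlinarith [norm_nonneg (x - y)]
  -- g2 bound
  have hfx : ‖f x - yhat‖ ≤ 2 * Lf + η := by
    calc ‖f x - yhat‖ = ‖(f x - f xhat) - (yhat - f xhat)‖ := by congr 1; abel
      _ ≤ ‖f x - f xhat‖ + ‖yhat - f xhat‖ := norm_sub_le _ _
      _ ≤ (‖f x‖ + ‖f xhat‖) + η := by
          have := norm_sub_le (f x) (f xhat); linarith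
      _ ≤ 2 * Lf + η := by
          have h1 := hfb x hx
          have h2 := hfb xhat (mem_closedBall_zero_iff.mpr hxhat)
          linarith
  have hfy : ‖f y - yhat‖ ≤ 2 * Lf + η := by
    calc ‖f y - yhat‖ = ‖(f y - f xhat) - (yhat - f xhat)‖ := by congr 1; abel
      _ ≤ ‖f y - f xhat‖ + ‖yhat - f xhat‖ := norm_sub_le _ _
      _ ≤ (‖f y‖ + ‖f xhat‖) + η := by
          have := norm_sub_le (f y) (f xhat); linarith
      _ ≤ 2 * Lf + η := by
          have h1 := hfb y hy
          have h2 := hfb xhat (mem_closedBall_zero_iff.mpr hxhat)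
          linarith
  have hlip : ‖f x - f y‖ ≤ Lx * ‖x - y‖ :=
    (convex_closedBall (0 : EuclideanSpace ℝ (Fin n)) h).norm_image_sub_le_of_norm_fderiv_le
      (fun z _ => (hf.differentiable one_ne_zero).differentiableAt) hdfb hy hx
  have hg2 : |((⟪f x - yhat, Matrix.toEuclideanLin P (f x - yhat)⟫ : ℝ)
        - ⟪x - xhat, Matrix.toEuclideanLin P (x - xhat)⟫)
      - ((⟪f y - yhat, Matrix.toEuclideanLin P (f y - yhat)⟫ : ℝ)
        - ⟪y - xhat, Matrix.toEuclideanLin P (y - xhat)⟫)| ≤ Bc * ‖x - y‖ := by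
    have hQ : |(⟪f x - yhat, Matrix.toEuclideanLin P (f x - yhat)⟫ : ℝ)
        - ⟪f y - yhat, Matrix.toEuclideanLin P (f y - yhat)⟫|
        ≤ lmax * (2 * (2 * Lf + η)) * (Lx * ‖x - y‖) := by
      refine (quad_diff hn P hP _ _).trans ?_
      have hsub2 : (f x - yhat) - (f y - yhat) = f x - f y := by abel
      rw [hsub2]
      have hmm : (‖f x - yhat‖ + ‖f y - yhat‖) * ‖f x - f y‖
          ≤ (2 * (2 * Lf + η)) * (Lx * ‖x - y‖) :=
        mul_le_mul (by linarith) hlip (norm_nonneg _) (by positivity)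
      calc lmax * ((‖f x - yhat‖ + ‖f y - yhat‖) * ‖f x - f y‖)
          ≤ lmax * ((2 * (2 * Lf + η)) * (Lx * ‖x - y‖)) :=
            mul_le_mul_of_nonneg_left hmm hmax0
        _ = lmax * (2 * (2 * Lf + η)) * (Lx * ‖x - y‖) := by ring
    calc _ ≤ |(⟪f x - yhat, Matrix.toEuclideanLin P (f x - yhat)⟫ : ℝ)
            - ⟪f y - yhat, Matrix.toEuclideanLin P (f y - yhat)⟫|
          + |(⟪x - xhat, Matrix.toEuclideanLin P (x - xhat)⟫ : ℝ)
            - ⟪y - xhat, Matrix.toEuclideanLin P (y - xhat)⟫| := by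
          rw [show ((⟪f x - yhat, Matrix.toEuclideanLin P (f x - yhat)⟫ : ℝ)
            - ⟪x - xhat, Matrix.toEuclideanLin P (x - xhat)⟫)
            - ((⟪f y - yhat, Matrix.toEuclideanLin P (f y - yhat)⟫ : ℝ)
              - ⟪y - xhat, Matrix.toEuclideanLin P (y - xhat)⟫)
            = ((⟪f x - yhat, Matrix.toEuclideanLin P (f x - yhat)⟫ : ℝ)
              - ⟪f y - yhat, Matrix.toEuclideanLin P (f y - yhat)⟫)
              - ((⟪x - xhat, Matrix.toEuclideanLin P (x - xhat)⟫ : ℝ)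
                - ⟪y - xhat, Matrix.toEuclideanLin P (y - xhat)⟫) by ring]
          exact abs_sub _ _
      _ ≤ lmax * (2 * (2 * Lf + η)) * (Lx * ‖x - y‖) + lmax * (4 * h) * ‖x - y‖ :=
          add_le_add hQ hq
      _ ≤ Bc * ‖x - y‖ := by rw [hBc]; nlinarith [norm_nonneg (x - y)]
  -- combine
  have hAB1 : A * ‖x - y‖ ≤ max A Bc * ‖x - y‖ :=
    mul_le_mul_of_nonneg_right (le_max_left A Bc) (norm_nonneg _)
  have hAB2 : Bc * ‖x - y‖ ≤ max A Bc * ‖x - y‖ :=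
    mul_le_mul_of_nonneg_right (le_max_right A Bc) (norm_nonneg _)
  exact le_trans (abs_max_sub_max_le_max _ _ _ _)
    (max_le (hg1.trans hAB1) (hg2.trans hAB2))
end
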